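/- arXiv:1406.2226 — 7 statements merged into one kernel-verified Lean document; each statement's English description precedes it below -/
import Mathlib

section
/- If b : T × T → ℚ/ℤ is a nonsingular symmetric bilinear form on a finite abelian group T, and q : T → ℚ/ℤ satisfies q(x+y) = q(x) + q(y) + b(x,y) for all x, y, then there exists a unique β ∈ T such that q(x) - q(-x) = b(x, β) for all x ∈ T, and moreover β ∈ 2T. -/
/-- Auxiliary: any homomorphism from a subgroup of an abelian group to `ℚ/ℤ`
extends to the whole group, by injectivity (divisibility) of `ℚ/ℤ`. -/
lemma extend_to_ratCircle {T : Type u} [AddCommGroup T] (S : AddSubgroup T)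
    (ψ : S →+ AddCircle (1 : ℚ)) :
    ∃ g : T →+ AddCircle (1 : ℚ), ∀ s : S, g (s : T) = ψ s := by
  haveI : Module.Injective ℤ (ULift.{u} (AddCircle (1 : ℚ))) :=
    (Module.Baer.of_divisible _).injective
  obtain ⟨h, hh⟩ := Module.Injective.out (R := ℤ)
    S.subtype.toIntLinearMap Subtype.coe_injective
    ((AddEquiv.ulift.symm.toAddMonoidHom.comp ψ).toIntLinearMap)
  refine ⟨(AddEquiv.ulift.toAddMonoidHom.comp h.toAddMonoidHom), fun s => ?_⟩
  have := hh s
  simpa using congrArg (AddEquiv.ulift (α := AddCircle (1 : ℚ))) this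

/-- A quadratic refinement `q` of a torsion form `b` on a finite abelian
group `T` has a unique homogeneity defect `β`, and `β ∈ 2T`. -/
theorem stmt0 {T : Type*} [AddCommGroup T] [Fintype T]
    (b : T → T → AddCircle (1 : ℚ))
    (hsymm : ∀ x y, b x y = b y x)
    (hadd : ∀ x y z, b (x + y) z = b x z + b y z)
    (hinj : ∀ x y : T, (∀ z, b z x = b z y) → x = y)
    (hsurj : ∀ φ : T →+ AddCircle (1 : ℚ), ∃ x : T, ∀ z, φ z = b z x)
    (q : T → AddCircle (1 : ℚ))
    (hq : ∀ x y, q (x + y) = q x + q y + b x y) :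
    (∃! β : T, ∀ x, q x - q (-x) = b x β) ∧
      ∀ β : T, (∀ x, q x - q (-x) = b x β) → ∃ γ : T, β = 2 • γ := by
  -- basic bilinearity facts
  have hadd' : ∀ x y z, b x (y + z) = b x y + b x z := by
    intro x y z; rw [hsymm, hadd, hsymm y x, hsymm z x]
  have hzero : ∀ x, b 0 x = 0 := by
    intro x
    have h := hadd 0 0 x
    simp only [add_zero] at h
    have h2 : b 0 x + 0 = b 0 x + b 0 x := by rw [add_zero]; exact h
    exact (add_left_cancel h2).symm
  have hneg : ∀ x y, b (-x) y = - b x y := by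
    intro x y
    have h := hadd x (-x) y
    simp only [add_neg_cancel, hzero] at h
    exact eq_neg_of_add_eq_zero_right h.symm
  have hq0 : q 0 = 0 := by
    have h := hq 0 0
    simp only [add_zero, hzero] at h
    have h2 : q 0 + 0 = q 0 + q 0 := by rw [add_zero]; exact h
    exact (add_left_cancel h2).symm
  -- the defect function is additive
  have hφadd : ∀ x y, (q (x + y) - q (-(x + y))) =
      (q x - q (-x)) + (q y - q (-y)) := by
    intro x y
    have h1 := hq x y
    have h2 := hq (-x) (-y)
    have h3 : b (-x) (-y) = b x y := by
      rw [hneg, hsymm, hneg, neg_neg, hsymm]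
    rw [neg_add] at *
    rw [h1, h2, h3]
    abel
  set φ : T →+ AddCircle (1 : ℚ) :=
    { toFun := fun x => q x - q (-x)
      map_zero' := by simp [hq0]
      map_add' := hφadd } with hφ
  obtain ⟨β₀, hβ₀⟩ := hsurj φ
  constructor
  · exact ⟨β₀, fun x => hβ₀ x, fun y hy => hinj y β₀ fun z => ((hy z).symm.trans (hβ₀ z))⟩
  · intro β hβ
    -- key: b z β = 0 whenever z + z = 0
    have hkill : ∀ z : T, z + z = 0 → b z β = 0 := by
      intro z hz
      have hnz : -z = z := by rw [neg_eq_iff_add_eq_zero, add_comm]; exact hz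
      have h := hβ z
      rw [hnz] at h
      rw [← h, sub_self]
    -- the doubling homomorphism
    set m : T →+ T :=
      { toFun := fun z => z + z
        map_zero' := by simp
        map_add' := by intro a c; abel } with hm
    -- b · β as a homomorphism
    set f : T →+ AddCircle (1 : ℚ) :=
      { toFun := fun z => b z β
        map_zero' := hzero β
        map_add' := fun x y => hadd x y β } with hf
    have hker : m.ker ≤ f.ker := by
      intro z hz
      exact hkill z hz
    -- lift f to T ⧸ ker m, then transport to range m
    set flift : T ⧸ m.ker →+ AddCircle (1 : ℚ) :=
      QuotientAddGroup.lift m.ker f hker with hflift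
    set e : T ⧸ m.ker ≃+ m.range := QuotientAddGroup.quotientKerEquivRange m with he
    set ψ : m.range →+ AddCircle (1 : ℚ) :=
      flift.comp (e.symm : m.range ≃+ T ⧸ m.ker).toAddMonoidHom with hψ
    have hψval : ∀ z : T, ψ ⟨m z, ⟨z, rfl⟩⟩ = b z β := by
      intro z
      have h1 : e (QuotientAddGroup.mk z) = ⟨m z, ⟨z, rfl⟩⟩ := rfl
      have h2 : (e.symm : m.range ≃+ T ⧸ m.ker) ⟨m z, ⟨z, rfl⟩⟩
          = QuotientAddGroup.mk z := by
        rw [← h1, AddEquiv.symm_apply_apply]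
      simp only [hψ, AddMonoidHom.comp_apply, AddEquiv.toAddMonoidHom_eq_coe,
        AddMonoidHom.coe_coe, h2]
      rfl
    -- extend ψ along the inclusion m.range →+ T using injectivity of ℚ/ℤ
    obtain ⟨g, hg⟩ := extend_to_ratCircle m.range ψ
    obtain ⟨γ, hγ⟩ := hsurj g
    refine ⟨γ, hinj β (2 • γ) fun z => ?_⟩
    have h1 : b z β = g (m z) := by
      rw [← hψval z, ← hg ⟨m z, ⟨z, rfl⟩⟩]
    have h2 : g (m z) = b (m z) γ := hγ (m z)
    have h3 : b (m z) γ = b z γ + b z γ := by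
      have hmz : m z = z + z := rfl
      rw [hmz, hadd]
    have h4 : b z (2 • γ) = b z γ + b z γ := by
      rw [two_nsmul, hadd' z γ γ]
    rw [h1, h2, h3, h4]
end

section
/- Let (H, λ) be a nondegenerate symmetric bilinear form over ℤ on a finitely generated free abelian group H, with adjoint λ̂ : H → H* injective with finite cokernel T = H*/λ̂(H). Then the rational extension λ⁻¹ on H* induces a well-defined symmetric bilinear form b_λ : T × T → ℚ/ℤ, b_λ(j(x̄), j(ȳ)) = λ⁻¹(x̄, ȳ) mod ℤ, and b_λ is nonsingular. -/
/-
If `λ̂ x = n • φ` with `n > 0` (such a pair exists because `T` is finite), then `λ̂_ℚ⁻¹ φ = x / n`,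
so `λ⁻¹(φ, ψ) = ψ x / n`; injectivity of `λ̂` makes this independent of the pair. Replacing `φ` by
`φ + λ̂ y` adds the integer `ψ y`, and by symmetry the same holds in the second variable, so
`λ⁻¹ mod ℤ` descends to `T`. If `λ⁻¹(φ, ψ) = ψ x / n` is integral for every `ψ`, then `x = n • y`
in the free module `H` and `φ = λ̂ y`: the form is nondegenerate. A character of `T` lifts, `H*`
being free, to `f : H* → ℚ`; then `f ∘ λ̂` is integral, i.e. some `G ∈ H*`, and
`λ⁻¹(φ, G) = G x / n = f (λ̂ x) / n = f φ`, so every character is of the form `b_λ(·, G)`.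
-/

open Module

theorem Submodule.exists_natCast_smul_mem_of_finite_quotient {M : Type*} [AddCommGroup M]
    [Module ℤ M] (p : Submodule ℤ M) [Finite (M ⧸ p)] (m : M) :
    ∃ n : ℕ, 0 < n ∧ (n : ℤ) • m ∈ p := by
  refine ⟨addOrderOf (Quotient.mk (p := p) m), (isOfFinAddOrder_of_finite _).addOrderOf_pos, ?_⟩
  rw [← Submodule.Quotient.mk_eq_zero, Submodule.Quotient.mk_smul, Nat.cast_smul_eq_nsmul,
    addOrderOf_nsmul_eq_zero]

theorem Module.exists_eq_smul_of_forall_dvd {R M : Type*} [CommRing R] [AddCommGroup M]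
    [Module R M] [Module.Free R M] [Module.Finite R M] {a : R} {x : M}
    (h : ∀ φ : Dual R M, a ∣ φ x) : ∃ y, x = a • y := by
  let b := Module.Free.chooseBasis R M
  choose c hc using fun i => h (b.coord i)
  refine ⟨∑ i, c i • b i, ?_⟩
  conv_lhs => rw [← b.sum_repr x]
  simp only [Finset.smul_sum, smul_smul]
  exact Finset.sum_congr rfl fun i _ => by rw [← hc i, Basis.coord_apply]

theorem LinearMap.exists_intCast_comp_eq {M : Type*} [AddCommGroup M] [Module ℤ M]
    (f : M →ₗ[ℤ] ℚ) (h : ∀ x, ∃ m : ℤ, f x = m) : ∃ G : Dual ℤ M, ∀ x, (G x : ℚ) = f x := by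
  choose g hg using h
  refine ⟨{ toFun := g, map_add' := fun x y => ?_, map_smul' := fun c x => ?_ },
    fun x => (hg x).symm⟩
  all_goals apply Int.cast_injective (α := ℚ)
  · push_cast
    rw [← hg, ← hg, ← hg, map_add]
  · rw [← hg, f.map_smul, hg]
    simp

theorem AddCircle.exists_lift_of_projective {M : Type*} [AddCommGroup M] [Module ℤ M]
    [Module.Projective ℤ M] (χ : M →+ AddCircle (1 : ℚ)) :
    ∃ f : M →ₗ[ℤ] ℚ, ∀ m, (f m : AddCircle (1 : ℚ)) = χ m := by
  obtain rfl : ‹Module ℤ M› = AddCommGroup.toIntModule M := Subsingleton.elim _ _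
  obtain ⟨f, hf⟩ := Module.projective_lifting_property
    (QuotientAddGroup.mk' (AddSubgroup.zmultiples (1 : ℚ))).toIntLinearMap χ.toIntLinearMap
    (QuotientAddGroup.mk'_surjective _)
  exact ⟨f, LinearMap.congr_fun hf⟩

theorem AddCircle.coe_eq_zero_iff_exists_intCast {R : Type*} [Ring R] {x : R} :
    (x : AddCircle (1 : R)) = 0 ↔ ∃ m : ℤ, x = m := by
  rw [AddCircle.coe_eq_zero_iff]
  exact exists_congr fun m => by rw [zsmul_one, eq_comm]

section InverseForm

variable {H : Type*} [AddCommGroup H] [Module ℤ H] {lam : H →ₗ[ℤ] Dual ℤ H}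

variable (lam) in
open Classical in
/-- `λ⁻¹(φ, ψ)`: if `λ̂ x = n • φ` then `λ̂_ℚ⁻¹ φ = x / n`, so `λ⁻¹(φ, ψ) = ψ x / n`. The junk value
`0` is only taken when no positive multiple of `φ` lies in the range of `λ̂`. -/
noncomputable def invForm (φ ψ : Dual ℤ H) : ℚ :=
  if h : ∃ p : ℕ × H, 0 < p.1 ∧ lam p.2 = (p.1 : ℤ) • φ then ψ h.choose.2 / h.choose.1 else 0

theorem invForm_eq (hinj : Function.Injective lam) {φ : Dual ℤ H} (ψ : Dual ℤ H) {n : ℕ} {x : H}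
    (hn : 0 < n) (hx : lam x = (n : ℤ) • φ) : invForm lam φ ψ = ψ x / n := by
  have h : ∃ p : ℕ × H, 0 < p.1 ∧ lam p.2 = (p.1 : ℤ) • φ := ⟨(n, x), hn, hx⟩
  obtain ⟨hm, hy⟩ := h.choose_spec
  set m := h.choose.1
  set y := h.choose.2
  have hxy : (n : ℤ) • y = (m : ℤ) • x := hinj <| by rw [map_zsmul, map_zsmul, hx, hy, smul_comm]
  have hψ : (n : ℤ) * ψ y = m * ψ x := by simpa using congrArg ψ hxy
  rw [invForm, dif_pos h, div_eq_div_iff (by positivity) (by positivity)]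
  exact_mod_cast (mul_comm _ _).trans (hψ.trans (mul_comm _ _))

theorem invForm_add_right (φ ψ ψ' : Dual ℤ H) :
    invForm lam φ (ψ + ψ') = invForm lam φ ψ + invForm lam φ ψ' := by
  unfold invForm
  split_ifs <;> simp [add_div]

theorem invForm_sub_right (φ ψ ψ' : Dual ℤ H) :
    invForm lam φ (ψ - ψ') = invForm lam φ ψ - invForm lam φ ψ' := by
  unfold invForm
  split_ifs <;> simp [sub_div]

theorem invForm_apply_left (hinj : Function.Injective lam) (y : H) (ψ : Dual ℤ H) :
    invForm lam (lam y) ψ = ψ y := by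
  simpa using invForm_eq hinj ψ one_pos (one_smul ℤ (lam y)).symm

variable (lam) in
noncomputable def discForm (s t : Dual ℤ H ⧸ LinearMap.range lam) : AddCircle (1 : ℚ) :=
  (invForm lam s.out t.out : ℚ)

variable [Finite (Dual ℤ H ⧸ LinearMap.range lam)]

variable (lam) in
theorem exists_lam_eq_smul (φ : Dual ℤ H) : ∃ n : ℕ, 0 < n ∧ ∃ x, lam x = (n : ℤ) • φ := by
  obtain ⟨n, hn, x, hx⟩ := (LinearMap.range lam).exists_natCast_smul_mem_of_finite_quotient φ
  exact ⟨n, hn, x, hx⟩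

theorem invForm_comm (hsymm : ∀ x y, lam x y = lam y x) (hinj : Function.Injective lam)
    (φ ψ : Dual ℤ H) : invForm lam φ ψ = invForm lam ψ φ := by
  obtain ⟨n, hn, x, hx⟩ := exists_lam_eq_smul lam φ
  obtain ⟨m, hm, y, hy⟩ := exists_lam_eq_smul lam ψ
  have hxy : (m : ℤ) * ψ x = n * φ y := by
    simpa [hx, hy] using hsymm y x
  rw [invForm_eq hinj ψ hn hx, invForm_eq hinj φ hm hy,
    div_eq_div_iff (by positivity) (by positivity)]
  exact_mod_cast (mul_comm _ _).trans (hxy.trans (mul_comm _ _))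

theorem invForm_add_left (hinj : Function.Injective lam) (φ φ' ψ : Dual ℤ H) :
    invForm lam (φ + φ') ψ = invForm lam φ ψ + invForm lam φ' ψ := by
  obtain ⟨n, hn, x, hx⟩ := exists_lam_eq_smul lam φ
  obtain ⟨n', hn', x', hx'⟩ := exists_lam_eq_smul lam φ'
  have hsum : lam ((n' : ℤ) • x + (n : ℤ) • x') = ((n * n' : ℕ) : ℤ) • (φ + φ') := by
    rw [map_add, map_zsmul, map_zsmul, hx, hx', smul_smul, smul_smul, smul_add]
    push_cast
    rw [mul_comm (n' : ℤ)]
  rw [invForm_eq hinj ψ (Nat.mul_pos hn hn') hsum, invForm_eq hinj ψ hn hx,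
    invForm_eq hinj ψ hn' hx', map_add, map_zsmul, map_zsmul, smul_eq_mul, smul_eq_mul]
  push_cast
  field_simp

theorem invForm_apply_right (hsymm : ∀ x y, lam x y = lam y x) (hinj : Function.Injective lam)
    (φ : Dual ℤ H) (y : H) : invForm lam φ (lam y) = φ y := by
  rw [invForm_comm hsymm hinj, invForm_apply_left hinj]

theorem invForm_coe_add_lam (hsymm : ∀ x y, lam x y = lam y x) (hinj : Function.Injective lam)
    (φ ψ : Dual ℤ H) (y z : H) :
    (invForm lam (φ + lam y) (ψ + lam z) : AddCircle (1 : ℚ)) = invForm lam φ ψ := by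
  have h : invForm lam (φ + lam y) (ψ + lam z) =
      invForm lam φ ψ + ((φ z + ψ y + lam z y : ℤ) : ℚ) := by
    rw [invForm_add_left hinj, invForm_add_right, invForm_add_right, invForm_apply_left hinj,
      invForm_apply_left hinj, invForm_apply_right hsymm hinj]
    push_cast
    ring
  rw [h, AddCircle.coe_add, AddCircle.coe_eq_zero_iff_exists_intCast.2 ⟨_, rfl⟩, add_zero]

theorem discForm_mk (hsymm : ∀ x y, lam x y = lam y x) (hinj : Function.Injective lam)
    (φ ψ : Dual ℤ H) :
    discForm lam (Submodule.Quotient.mk φ) (Submodule.Quotient.mk ψ) = invForm lam φ ψ := by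
  have hout (χ : Dual ℤ H) :
      ∃ y, (Submodule.Quotient.mk χ : Dual ℤ H ⧸ LinearMap.range lam).out = χ + lam y := by
    obtain ⟨y, hy⟩ := (Submodule.Quotient.eq (LinearMap.range lam)).1
      (Quotient.out_eq (Submodule.Quotient.mk χ))
    exact ⟨y, by rw [hy, add_sub_cancel]⟩
  obtain ⟨y, hy⟩ := hout φ
  obtain ⟨z, hz⟩ := hout ψ
  rw [discForm, hy, hz, invForm_coe_add_lam hsymm hinj]

theorem mem_range_of_forall_invForm_eq_intCast [Module.Free ℤ H] [Module.Finite ℤ H]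
    (hinj : Function.Injective lam) {δ : Dual ℤ H} (h : ∀ ψ, ∃ m : ℤ, invForm lam δ ψ = m) :
    δ ∈ LinearMap.range lam := by
  obtain ⟨n, hn, x, hx⟩ := exists_lam_eq_smul lam δ
  have hdvd (ψ : Dual ℤ H) : (n : ℤ) ∣ ψ x := by
    obtain ⟨m, hm⟩ := h ψ
    rw [invForm_eq hinj ψ hn hx, div_eq_iff (by positivity)] at hm
    exact ⟨m, by exact_mod_cast hm.trans (mul_comm _ _)⟩
  obtain ⟨y, rfl⟩ := Module.exists_eq_smul_of_forall_dvd hdvd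
  refine ⟨y, smul_right_injective (Dual ℤ H) (by positivity : (n : ℤ) ≠ 0) ?_⟩
  simpa [map_smul] using hx

theorem exists_invForm_right_eq (hinj : Function.Injective lam) (f : Dual ℤ H →ₗ[ℤ] ℚ)
    (hf : ∀ x, ∃ m : ℤ, f (lam x) = m) : ∃ G : Dual ℤ H, ∀ φ, invForm lam φ G = f φ := by
  obtain ⟨G, hG⟩ := (f ∘ₗ lam).exists_intCast_comp_eq hf
  refine ⟨G, fun φ => ?_⟩
  obtain ⟨n, hn, x, hx⟩ := exists_lam_eq_smul lam φ
  rw [invForm_eq hinj G hn hx, hG, LinearMap.comp_apply, hx, map_zsmul]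
  field_simp
  simp

theorem discForm_comm (hsymm : ∀ x y, lam x y = lam y x) (hinj : Function.Injective lam)
    (s t : Dual ℤ H ⧸ LinearMap.range lam) :
    discForm lam s t = discForm lam t s := by
  obtain ⟨φ, rfl⟩ := Submodule.Quotient.mk_surjective _ s
  obtain ⟨ψ, rfl⟩ := Submodule.Quotient.mk_surjective _ t
  rw [discForm_mk hsymm hinj, discForm_mk hsymm hinj, invForm_comm hsymm hinj]

theorem discForm_add_left (hsymm : ∀ x y, lam x y = lam y x) (hinj : Function.Injective lam)
    (s t u : Dual ℤ H ⧸ LinearMap.range lam) :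
    discForm lam (s + t) u = discForm lam s u + discForm lam t u := by
  obtain ⟨φ, rfl⟩ := Submodule.Quotient.mk_surjective _ s
  obtain ⟨φ', rfl⟩ := Submodule.Quotient.mk_surjective _ t
  obtain ⟨ψ, rfl⟩ := Submodule.Quotient.mk_surjective _ u
  rw [← Submodule.Quotient.mk_add, discForm_mk hsymm hinj, discForm_mk hsymm hinj,
    discForm_mk hsymm hinj, invForm_add_left hinj, AddCircle.coe_add]

theorem eq_of_forall_discForm_eq [Module.Free ℤ H] [Module.Finite ℤ H]
    (hsymm : ∀ x y, lam x y = lam y x) (hinj : Function.Injective lam)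
    {s t : Dual ℤ H ⧸ LinearMap.range lam} (h : ∀ u, discForm lam u s = discForm lam u t) :
    s = t := by
  obtain ⟨ψ, rfl⟩ := Submodule.Quotient.mk_surjective _ s
  obtain ⟨ψ', rfl⟩ := Submodule.Quotient.mk_surjective _ t
  refine (Submodule.Quotient.eq _).2 (mem_range_of_forall_invForm_eq_intCast hinj fun φ => ?_)
  have hφ := h (Submodule.Quotient.mk φ)
  rw [discForm_mk hsymm hinj, discForm_mk hsymm hinj, ← sub_eq_zero, ← AddCircle.coe_sub,
    AddCircle.coe_eq_zero_iff_exists_intCast] at hφ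
  obtain ⟨m, hm⟩ := hφ
  exact ⟨m, by rw [invForm_comm hsymm hinj, invForm_sub_right, hm]⟩

theorem exists_eq_discForm_right [Module.Free ℤ H] [Module.Finite ℤ H]
    (hsymm : ∀ x y, lam x y = lam y x) (hinj : Function.Injective lam)
    (χ : (Dual ℤ H ⧸ LinearMap.range lam) →+ AddCircle (1 : ℚ)) :
    ∃ s, ∀ u, χ u = discForm lam u s := by
  obtain ⟨f, hf⟩ :=
    AddCircle.exists_lift_of_projective (χ.comp (LinearMap.range lam).mkQ.toAddMonoidHom)
  obtain ⟨G, hG⟩ := exists_invForm_right_eq hinj f fun x =>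
    AddCircle.coe_eq_zero_iff_exists_intCast.1 <| by
      rw [hf, AddMonoidHom.comp_apply, LinearMap.toAddMonoidHom_coe, Submodule.mkQ_apply,
        (Submodule.Quotient.mk_eq_zero _).2 (LinearMap.mem_range_self lam x), map_zero]
  refine ⟨Submodule.Quotient.mk G, fun u => ?_⟩
  obtain ⟨φ, rfl⟩ := Submodule.Quotient.mk_surjective _ u
  rw [discForm_mk hsymm hinj, hG, hf]
  rfl

end InverseForm

/-- a nondegenerate symmetric integral bilinear form `λ` on a finitely
generated free abelian group `H`, with finite cokernel `T = H*/λ̂(H)`, induces a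
well-defined nonsingular symmetric bilinear form `b_λ : T × T → ℚ/ℤ`, where
`b_λ(j φ, j ψ) = ψ(x)/n mod ℤ` whenever `λ̂(x) = n·φ` (this is the rational
inverse form `λ⁻¹` reduced mod ℤ). -/
theorem stmt5 {H : Type*} [AddCommGroup H] [Module ℤ H]
    [Module.Free ℤ H] [Module.Finite ℤ H]
    (lam : H →ₗ[ℤ] Module.Dual ℤ H)
    (hsymm : ∀ x y : H, lam x y = lam y x)
    (hinj : Function.Injective lam)
    (hfin : Finite (Module.Dual ℤ H ⧸ LinearMap.range lam)) :
    ∃ b : (Module.Dual ℤ H ⧸ LinearMap.range lam) →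
        (Module.Dual ℤ H ⧸ LinearMap.range lam) → AddCircle (1 : ℚ),
      (∀ (φ ψ : Module.Dual ℤ H) (n : ℕ) (x : H), 0 < n → lam x = (n : ℤ) • φ →
        b (Submodule.Quotient.mk φ) (Submodule.Quotient.mk ψ) =
          (((ψ x : ℚ) / (n : ℚ) : ℚ) : AddCircle (1 : ℚ))) ∧
      (∀ s t, b s t = b t s) ∧
      (∀ s t u, b (s + t) u = b s u + b t u) ∧
      (∀ s t, (∀ u, b u s = b u t) → s = t) ∧
      (∀ φ : (Module.Dual ℤ H ⧸ LinearMap.range lam) →+ AddCircle (1 : ℚ),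
        ∃ s, ∀ u, φ u = b u s) := by
  refine ⟨discForm lam, fun φ ψ n x hn hx => ?_, discForm_comm hsymm hinj,
    discForm_add_left hsymm hinj, fun s t => eq_of_forall_discForm_eq hsymm hinj,
    exists_eq_discForm_right hsymm hinj⟩
  rw [discForm_mk hsymm hinj, invForm_eq hinj ψ hn hx]
end

section
/- Let (H, λ, α) be a nondegenerate characteristic form, i.e. λ : H × H → ℤ nondegenerate symmetric bilinear on a finitely generated free abelian group and α ∈ H* with λ(x,x) ≡ α(x) mod 2 for all x ∈ H. Then the function q : T → ℚ/ℤ on T = coker(λ̂) defined by q(j(x̄)) = (λ⁻¹(x̄, x̄) + λ⁻¹(x̄, α))/2 mod ℤ is well-defined (independent of the lift x̄) and is a quadratic refinement of the torsion form b_λ, with homogeneity defect j(α). -/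
/-!
Choose `n > 0` and `x` with `λ̂ x = n • φ` (possible since `coker λ̂` is finite), so that
`λ⁻¹(φ, ψ) = ψ x / n` and `q (j φ) = (φ x + α x) / 2n`. Injectivity of `λ̂` makes this value
independent of `(n, x)`. Replacing `φ` by `φ + λ̂ z` and `x` by `x + n z` changes it by
`φ z + (λ(z, z) + α z) / 2`, an integer because `α` is characteristic. The quadratic and
homogeneity identities are then identities between rational numbers.
-/

theorem Submodule.exists_nsmul_mem_of_finite_quotient {M : Type*} [AddCommGroup M]
    [Module ℤ M] (p : Submodule ℤ M) [Finite (M ⧸ p)] (y : M) :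
    ∃ n : ℕ, 0 < n ∧ n • y ∈ p :=
  ⟨Nat.card (M ⧸ p), Nat.card_pos, (Submodule.Quotient.mk_eq_zero p).1 <| by
    rw [Submodule.Quotient.mk_smul]; exact card_nsmul_eq_zero'⟩

theorem AddCircle.coe_intCast_eq_zero (k : ℤ) : ((k : ℚ) : AddCircle (1 : ℚ)) = 0 :=
  (AddCircle.coe_eq_zero_iff _).2 ⟨k, by simp⟩

namespace CharacteristicForm

variable {H : Type*} [AddCommGroup H] [Module ℤ H]

/-- `(λ⁻¹(φ, φ) + λ⁻¹(φ, α)) / 2`, computed from a solution of `λ̂ x = n • φ`. -/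
def quadValue (α φ : Module.Dual ℤ H) (n : ℕ) (x : H) : ℚ :=
  ((φ x : ℚ) + (α x : ℚ)) / (2 * (n : ℚ))

variable {lam : H →ₗ[ℤ] Module.Dual ℤ H}

theorem exists_lam_eq_nsmul (hfin : Finite (Module.Dual ℤ H ⧸ LinearMap.range lam))
    (φ : Module.Dual ℤ H) : ∃ n : ℕ, ∃ x : H, 0 < n ∧ lam x = (n : ℤ) • φ := by
  obtain ⟨n, hn, x, hx⟩ := (LinearMap.range lam).exists_nsmul_mem_of_finite_quotient φ
  exact ⟨n, x, hn, by rw [hx, natCast_zsmul]⟩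

theorem quadValue_eq_of_lam_eq (hinj : Function.Injective lam) (α : Module.Dual ℤ H)
    {φ : Module.Dual ℤ H} {n m : ℕ} {x y : H} (hn : 0 < n) (hm : 0 < m)
    (hx : lam x = (n : ℤ) • φ) (hy : lam y = (m : ℤ) • φ) :
    quadValue α φ n x = quadValue α φ m y := by
  have hxy : (m : ℤ) • x = (n : ℤ) • y := hinj <| by
    rw [map_zsmul, map_zsmul, hx, hy, smul_smul, smul_smul, mul_comm]
  have hφ := congrArg φ hxy
  have hα := congrArg α hxy
  simp only [map_zsmul, smul_eq_mul] at hφ hα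
  have hn' : (n : ℚ) ≠ 0 := by exact_mod_cast hn.ne'
  have hm' : (m : ℚ) ≠ 0 := by exact_mod_cast hm.ne'
  unfold quadValue
  rw [div_eq_div_iff (by positivity) (by positivity)]
  have hφ' : (m : ℚ) * φ x = n * φ y := by exact_mod_cast hφ
  have hα' : (m : ℚ) * α x = n * α y := by exact_mod_cast hα
  linear_combination (2 : ℚ) * (hφ' + hα')

theorem quadValue_add_lam (hsymm : ∀ x y : H, lam x y = lam y x) (α : Module.Dual ℤ H)
    {φ : Module.Dual ℤ H} {n : ℕ} {x z : H} {c : ℤ} (hn : 0 < n)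
    (hx : lam x = (n : ℤ) • φ) (hc : lam z z = α z + 2 * c) :
    quadValue α (φ + lam z) n (x + (n : ℤ) • z) = quadValue α φ n x + (φ z + α z + c : ℤ) := by
  have hzx : lam z x = n * φ z := by rw [hsymm, hx]; simp
  have hn' : (n : ℚ) ≠ 0 := by exact_mod_cast hn.ne'
  have hzx' : (lam z x : ℚ) = n * φ z := by exact_mod_cast hzx
  have hc' : (lam z z : ℚ) = α z + 2 * c := by exact_mod_cast hc
  unfold quadValue
  simp only [LinearMap.add_apply, map_add, map_zsmul, smul_eq_mul]
  push_cast
  field_simp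
  linear_combination hzx' + (n : ℚ) * hc'

theorem coe_quadValue_eq_of_mk_eq (hsymm : ∀ x y : H, lam x y = lam y x)
    (hinj : Function.Injective lam) {α : Module.Dual ℤ H}
    (hchar : ∀ x : H, ∃ c : ℤ, lam x x = α x + 2 * c) {φ φ' : Module.Dual ℤ H}
    (h : (Submodule.Quotient.mk φ : Module.Dual ℤ H ⧸ LinearMap.range lam) =
      Submodule.Quotient.mk φ')
    {n m : ℕ} {x y : H} (hn : 0 < n) (hm : 0 < m)
    (hx : lam x = (n : ℤ) • φ) (hy : lam y = (m : ℤ) • φ') :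
    (quadValue α φ n x : AddCircle (1 : ℚ)) = quadValue α φ' m y := by
  obtain ⟨z, hz⟩ : φ' - φ ∈ LinearMap.range lam := by
    simpa using (LinearMap.range lam).neg_mem ((Submodule.Quotient.eq _).1 h)
  obtain ⟨c, hc⟩ := hchar z
  obtain rfl : φ' = φ + lam z := by rw [hz]; abel
  have hx' : lam (x + (n : ℤ) • z) = (n : ℤ) • (φ + lam z) := by
    rw [map_add, map_zsmul, hx, smul_add]
  rw [← quadValue_eq_of_lam_eq hinj α hn hm hx' hy, quadValue_add_lam hsymm α hn hx hc,
    AddCircle.coe_add, AddCircle.coe_intCast_eq_zero, add_zero]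

theorem quadValue_add (hsymm : ∀ x y : H, lam x y = lam y x) (α : Module.Dual ℤ H)
    {φ ψ : Module.Dual ℤ H} {n m : ℕ} {x y : H} (hn : 0 < n) (hm : 0 < m)
    (hx : lam x = (n : ℤ) • φ) (hy : lam y = (m : ℤ) • ψ) :
    quadValue α (φ + ψ) (n * m) ((m : ℤ) • x + (n : ℤ) • y) =
      quadValue α φ n x + quadValue α ψ m y + (ψ x : ℚ) / n := by
  have hxy : (n : ℚ) * φ y = m * ψ x := by
    have h := hsymm x y
    rw [hx, hy] at h
    simp only [LinearMap.smul_apply, smul_eq_mul] at h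
    exact_mod_cast h
  have hn' : (n : ℚ) ≠ 0 := by exact_mod_cast hn.ne'
  have hm' : (m : ℚ) ≠ 0 := by exact_mod_cast hm.ne'
  unfold quadValue
  simp only [LinearMap.add_apply, map_add, map_zsmul, smul_eq_mul]
  push_cast
  field_simp
  linear_combination hxy

theorem quadValue_sub_quadValue_neg (α φ : Module.Dual ℤ H) {n : ℕ} (x : H) (hn : 0 < n) :
    quadValue α φ n x - quadValue α (-φ) n (-x) = (α x : ℚ) / n := by
  have hn' : (n : ℚ) ≠ 0 := by exact_mod_cast hn.ne'
  unfold quadValue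
  simp only [LinearMap.neg_apply, map_neg, neg_neg]
  push_cast
  field_simp
  ring

end CharacteristicForm

open CharacteristicForm in
theorem stmt6_general {H : Type*} [AddCommGroup H] [Module ℤ H]
    (lam : H →ₗ[ℤ] Module.Dual ℤ H)
    (hsymm : ∀ x y : H, lam x y = lam y x)
    (hinj : Function.Injective lam)
    (hfin : Finite (Module.Dual ℤ H ⧸ LinearMap.range lam))
    (α : Module.Dual ℤ H)
    (hchar : ∀ x : H, ∃ c : ℤ, lam x x = α x + 2 * c)
    (b : (Module.Dual ℤ H ⧸ LinearMap.range lam) →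
        (Module.Dual ℤ H ⧸ LinearMap.range lam) → AddCircle (1 : ℚ))
    (hb : ∀ (φ ψ : Module.Dual ℤ H) (n : ℕ) (x : H), 0 < n → lam x = (n : ℤ) • φ →
        b (Submodule.Quotient.mk φ) (Submodule.Quotient.mk ψ) =
          (((ψ x : ℚ) / (n : ℚ) : ℚ) : AddCircle (1 : ℚ))) :
    ∃ q : (Module.Dual ℤ H ⧸ LinearMap.range lam) → AddCircle (1 : ℚ),
      (∀ (φ : Module.Dual ℤ H) (n : ℕ) (x : H), 0 < n → lam x = (n : ℤ) • φ →
        q (Submodule.Quotient.mk φ) =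
          ((((φ x : ℚ) + (α x : ℚ)) / (2 * (n : ℚ)) : ℚ) : AddCircle (1 : ℚ))) ∧
      (∀ s t, q (s + t) = q s + q t + b s t) ∧
      (∀ s, q s - q (-s) = b s (Submodule.Quotient.mk α)) := by
  choose n x hn hx using exists_lam_eq_nsmul hfin
  let q : (Module.Dual ℤ H ⧸ LinearMap.range lam) → AddCircle (1 : ℚ) := fun s =>
    quadValue α s.out (n s.out) (x s.out)
  have hq : ∀ (φ : Module.Dual ℤ H) (m : ℕ) (y : H), 0 < m → lam y = (m : ℤ) • φ →
      q (Submodule.Quotient.mk φ) = (quadValue α φ m y : AddCircle (1 : ℚ)) :=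
    fun φ m y hm hy => coe_quadValue_eq_of_mk_eq hsymm hinj hchar
      (Submodule.Quotient.mk_out _) (hn _) hm (hx _) hy
  refine ⟨q, hq, ?_, ?_⟩
  · intro s t
    obtain ⟨φ, rfl⟩ := Submodule.Quotient.mk_surjective _ s
    obtain ⟨ψ, rfl⟩ := Submodule.Quotient.mk_surjective _ t
    have hsum : lam ((n ψ : ℤ) • x φ + (n φ : ℤ) • x ψ) = ((n φ * n ψ : ℕ) : ℤ) • (φ + ψ) := by
      rw [map_add, map_zsmul, map_zsmul, hx, hx, smul_smul, smul_smul, Nat.cast_mul, smul_add,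
        mul_comm]
    rw [← Submodule.Quotient.mk_add, hq _ _ _ (Nat.mul_pos (hn φ) (hn ψ)) hsum,
      quadValue_add hsymm α (hn φ) (hn ψ) (hx φ) (hx ψ), hq φ _ _ (hn φ) (hx φ),
      hq ψ _ _ (hn ψ) (hx ψ), hb φ ψ _ _ (hn φ) (hx φ), AddCircle.coe_add, AddCircle.coe_add]
  · intro s
    obtain ⟨φ, rfl⟩ := Submodule.Quotient.mk_surjective _ s
    have hneg : lam (-x φ) = (n φ : ℤ) • -φ := by rw [map_neg, hx, smul_neg]
    rw [← Submodule.Quotient.mk_neg, hq φ _ _ (hn φ) (hx φ), hq (-φ) _ _ (hn φ) hneg,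
      hb φ α _ _ (hn φ) (hx φ), ← quadValue_sub_quadValue_neg α φ (x φ) (hn φ),
      AddCircle.coe_sub]

/-- a nondegenerate characteristic form `(H, λ, α)` induces a
well-defined quadratic refinement `q(j φ) = (λ⁻¹(φ,φ) + λ⁻¹(φ,α))/2 mod ℤ`
of the torsion form `b_λ` on `T = coker λ̂`, with homogeneity defect `j(α)`.
(Here `λ⁻¹(φ,ψ) = ψ(x)/n` whenever `λ̂(x) = n·φ`.) -/
theorem stmt6 {H : Type*} [AddCommGroup H] [Module ℤ H]
    [Module.Free ℤ H] [Module.Finite ℤ H]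
    (lam : H →ₗ[ℤ] Module.Dual ℤ H)
    (hsymm : ∀ x y : H, lam x y = lam y x)
    (hinj : Function.Injective lam)
    (hfin : Finite (Module.Dual ℤ H ⧸ LinearMap.range lam))
    (α : Module.Dual ℤ H)
    (hchar : ∀ x : H, ∃ c : ℤ, lam x x = α x + 2 * c)
    (b : (Module.Dual ℤ H ⧸ LinearMap.range lam) →
        (Module.Dual ℤ H ⧸ LinearMap.range lam) → AddCircle (1 : ℚ))
    (hb : ∀ (φ ψ : Module.Dual ℤ H) (n : ℕ) (x : H), 0 < n → lam x = (n : ℤ) • φ →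
        b (Submodule.Quotient.mk φ) (Submodule.Quotient.mk ψ) =
          (((ψ x : ℚ) / (n : ℚ) : ℚ) : AddCircle (1 : ℚ))) :
    ∃ q : (Module.Dual ℤ H ⧸ LinearMap.range lam) → AddCircle (1 : ℚ),
      (∀ (φ : Module.Dual ℤ H) (n : ℕ) (x : H), 0 < n → lam x = (n : ℤ) • φ →
        q (Submodule.Quotient.mk φ) =
          ((((φ x : ℚ) + (α x : ℚ)) / (2 * (n : ℚ)) : ℚ) : AddCircle (1 : ℚ))) ∧
      (∀ s t, q (s + t) = q s + q t + b s t) ∧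
      (∀ s, q s - q (-s) = b s (Submodule.Quotient.mk α)) :=
  stmt6_general lam hsymm hinj hfin α hchar b hb
end

section
/- Let b be a torsion form on a finite abelian group T and q a homogeneous quadratic refinement of b (i.e. q(x) = q(-x) for all x). Then 8·A(q) ∈ ℤ, i.e. the Arf invariant of q is an eighth of an integer. -/
/-- The exponential character `r ↦ e^{2πir}` on `ℚ`. -/
noncomputable def eQ : ℚ → ℂ := fun r => Complex.exp (2 * Real.pi * Complex.I * (r : ℂ))

theorem eQ_periodic : Function.Periodic eQ 1 := by
  intro r
  simp only [eQ]
  push_cast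
  rw [mul_add, mul_one, Complex.exp_add, Complex.exp_two_pi_mul_I, mul_one]

/-- The induced character `e^{2πi ·} : ℚ/ℤ → ℂ`. -/
noncomputable def eQZ : AddCircle (1 : ℚ) → ℂ := eQ_periodic.lift

/-!
Let `G = ∑ₓ e(q x)`. Then `G⁴` is the Gauss sum of `q ⊕ q ⊕ q ⊕ q` on `T⁴`. By Lagrange, write
`|T|² - 1 = a₁² + a₂² + a₃² + a₄²`; left multiplication by the quaternion `a₁ + a₂ i + a₃ j + a₄ k`
is then an automorphism of `T⁴` (its conjugate inverts it up to the factor `|T|² - 1 = -1`), and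
by Euler's four-square identity it multiplies `q ⊕ q ⊕ q ⊕ q` by `|T|² - 1`, i.e. negates it.
Reindexing, `G⁴ = conj G⁴`, so `|T|² e(4A) = |T|² e(-4A)` and `8A = 0`.
-/

open ComplexConjugate

lemma eQZ_coe (r : ℚ) : eQZ (r : AddCircle (1 : ℚ)) = eQ r :=
  Function.Periodic.lift_coe _ _

lemma eQZ_zero : eQZ 0 = 1 := by
  simpa [eQ] using eQZ_coe 0

lemma eQZ_add (x y : AddCircle (1 : ℚ)) : eQZ (x + y) = eQZ x * eQZ y := by
  induction x using QuotientAddGroup.induction_on with | H r =>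
  induction y using QuotientAddGroup.induction_on with | H s =>
  rw [← QuotientAddGroup.mk_add, eQZ_coe, eQZ_coe, eQZ_coe, eQ, eQ, eQ, ← Complex.exp_add]
  push_cast
  ring_nf

lemma eQZ_neg (x : AddCircle (1 : ℚ)) : eQZ (-x) = conj (eQZ x) := by
  induction x using QuotientAddGroup.induction_on with | H r =>
  rw [← QuotientAddGroup.mk_neg, eQZ_coe, eQZ_coe, eQ, eQ, ← Complex.exp_conj]
  simp only [map_mul, Complex.conj_I, Complex.conj_ofReal, map_ofNat, map_ratCast]
  push_cast
  ring_nf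

lemma eQZ_nsmul (n : ℕ) (x : AddCircle (1 : ℚ)) : eQZ (n • x) = eQZ x ^ n := by
  induction n with
  | zero => simp [eQZ_zero]
  | succ k ih => rw [succ_nsmul, eQZ_add, ih, pow_succ]

lemma eq_zero_of_eQZ_eq_one {x : AddCircle (1 : ℚ)} (h : eQZ x = 1) : x = 0 := by
  induction x using QuotientAddGroup.induction_on with | H r =>
  rw [eQZ_coe, eQ, Complex.exp_eq_one_iff] at h
  obtain ⟨n, hn⟩ := h
  have hr : (r : ℂ) = n := mul_left_cancel₀ Complex.two_pi_I_ne_zero (by linear_combination hn)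
  have hrq : (n : ℚ) = r := by exact_mod_cast hr.symm
  exact (AddCircle.coe_eq_zero_iff _).mpr ⟨n, by simpa using hrq⟩

namespace LinearMap

variable {T M : Type*} [AddCommGroup T] [AddCommGroup M]

def mk₂OfSymm (b : T → T → M) (hsymm : ∀ x y, b x y = b y x)
    (hadd : ∀ x y z, b (x + y) z = b x z + b y z) : LinearMap.BilinMap ℤ T M :=
  have smul_left (k : ℤ) (x y : T) : b (k • x) y = k • b x y :=
    map_zsmul (AddMonoidHom.mk' (b · y) (hadd · · y)) k x
  mk₂ ℤ b hadd smul_left (fun x y z => by rw [hsymm, hadd, hsymm, hsymm z])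
    (fun k x y => by rw [hsymm, smul_left, hsymm])

end LinearMap

namespace QuadraticMap

variable {T M : Type*} [AddCommGroup T] [AddCommGroup M]

def ofRefinement (B : LinearMap.BilinMap ℤ T M) (q : T → M)
    (hq : ∀ x y, q (x + y) = q x + q y + B x y) (hhom : ∀ x, q x = q (-x)) :
    QuadraticMap ℤ T M where
  toFun := q
  toFun_smul k x := by
    have hq0 : q 0 = 0 := by simpa using hq 0 0
    -- homogeneity is what makes the diagonal of `B` twice `q`
    have hdiag : B x x = 2 • q x := by
      have h := hq x (-x)
      rw [add_neg_cancel, hq0, ← hhom, map_neg] at h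
      exact two_nsmul (q x) ▸ (add_neg_eq_zero.mp h.symm).symm
    induction k using Int.induction_on with
    | zero => simpa using hq0
    | succ k ih =>
      rw [add_smul, one_smul, hq, ih, LinearMap.map_smul₂, hdiag]
      module
    | pred k ih =>
      rw [sub_smul, one_smul, sub_eq_add_neg, hq, ih, ← hhom, LinearMap.map_smul₂, map_neg,
        hdiag]
      module
  exists_companion' := ⟨B, hq⟩

end QuadraticMap

section Quaternion

variable {R M N : Type*} [CommRing R] [AddCommGroup M] [Module R M] [AddCommGroup N] [Module R N]

/-- Left multiplication by the quaternion `a₁ + a₂ i + a₃ j + a₄ k`, acting on `M⁴`. -/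
def quatMap (a₁ a₂ a₃ a₄ : R) (v : M × M × M × M) : M × M × M × M :=
  (a₁ • v.1 + (-a₂) • v.2.1 + (-a₃) • v.2.2.1 + (-a₄) • v.2.2.2,
   a₂ • v.1 + a₁ • v.2.1 + (-a₄) • v.2.2.1 + a₃ • v.2.2.2,
   a₃ • v.1 + a₄ • v.2.1 + a₁ • v.2.2.1 + (-a₂) • v.2.2.2,
   a₄ • v.1 + (-a₃) • v.2.1 + a₂ • v.2.2.1 + a₁ • v.2.2.2)

lemma quatMap_conj_quatMap (a₁ a₂ a₃ a₄ : R) (v : M × M × M × M) :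
    quatMap a₁ (-a₂) (-a₃) (-a₄) (quatMap a₁ a₂ a₃ a₄ v) =
      (a₁ ^ 2 + a₂ ^ 2 + a₃ ^ 2 + a₄ ^ 2) • v := by
  obtain ⟨x, y, z, w⟩ := v
  simp only [quatMap, Prod.smul_mk, Prod.mk.injEq]
  refine ⟨?_, ?_, ?_, ?_⟩ <;> module

lemma quatMap_bijective {a₁ a₂ a₃ a₄ : R} [Finite M]
    (ha : ∀ x : M, (a₁ ^ 2 + a₂ ^ 2 + a₃ ^ 2 + a₄ ^ 2) • x = -x) :
    (quatMap a₁ a₂ a₃ a₄ : M × M × M × M → M × M × M × M).Bijective := by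
  refine Finite.injective_iff_bijective.mp fun v w hvw => ?_
  have h := congrArg (quatMap a₁ (-a₂) (-a₃) (-a₄)) hvw
  simp only [quatMap_conj_quatMap] at h
  simpa [Prod.ext_iff, ha] using h

namespace QuadraticMap

lemma map_smul_add_smul_add_smul_add_smul (Q : QuadraticMap R M N) (a b c d : R) (x y z w : M) :
    Q (a • x + b • y + c • z + d • w) =
      (a * a) • Q x + (b * b) • Q y + (c * c) • Q z + (d * d) • Q w +
      (a * b) • polar Q x y + (a * c) • polar Q x z + (a * d) • polar Q x w +
      (b * c) • polar Q y z + (b * d) • polar Q y w + (c * d) • polar Q z w := by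
  simp only [QuadraticMap.map_add Q, QuadraticMap.map_smul, polar_add_left, polar_smul_left,
    polar_smul_right]
  module

def prodFour (Q : QuadraticMap R M N) : QuadraticMap R (M × M × M × M) N :=
  Q.prod (Q.prod (Q.prod Q))

lemma prodFour_apply (Q : QuadraticMap R M N) (v : M × M × M × M) :
    Q.prodFour v = Q v.1 + (Q v.2.1 + (Q v.2.2.1 + Q v.2.2.2)) := rfl

/-- Euler's four-square identity, for an arbitrary quadratic map. -/
lemma prodFour_quatMap (Q : QuadraticMap R M N) (a₁ a₂ a₃ a₄ : R) (v : M × M × M × M) :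
    Q.prodFour (quatMap a₁ a₂ a₃ a₄ v) = (a₁ ^ 2 + a₂ ^ 2 + a₃ ^ 2 + a₄ ^ 2) • Q.prodFour v := by
  obtain ⟨x, y, z, w⟩ := v
  simp only [prodFour_apply, quatMap, map_smul_add_smul_add_smul_add_smul]
  module

end QuadraticMap

end Quaternion

noncomputable def expSum {X : Type*} [Fintype X] (f : X → AddCircle (1 : ℚ)) : ℂ :=
  ∑ x, eQZ (f x)

lemma expSum_eq_conj_of_comp_eq_neg {X : Type*} [Fintype X] (f : X → AddCircle (1 : ℚ))
    {φ : X → X} (hφ : φ.Bijective) (hf : ∀ x, f (φ x) = -f x) :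
    expSum f = conj (expSum f) := by
  conv_lhs => rw [expSum, ← hφ.sum_comp]
  simp only [hf, eQZ_neg, expSum, map_sum]

section ExpSum

variable {M₁ M₂ : Type*} [AddCommGroup M₁] [Fintype M₁] [AddCommGroup M₂] [Fintype M₂]

lemma expSum_prod (Q₁ : QuadraticMap ℤ M₁ (AddCircle (1 : ℚ)))
    (Q₂ : QuadraticMap ℤ M₂ (AddCircle (1 : ℚ))) :
    expSum (Q₁.prod Q₂) = expSum Q₁ * expSum Q₂ := by
  simp only [expSum, Fintype.sum_prod_type, QuadraticMap.prod_apply, eQZ_add, Finset.sum_mul_sum]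

lemma expSum_prodFour (Q : QuadraticMap ℤ M₁ (AddCircle (1 : ℚ))) :
    expSum Q.prodFour = expSum Q ^ 4 := by
  rw [QuadraticMap.prodFour, expSum_prod, expSum_prod, expSum_prod]
  ring

end ExpSum

lemma eight_smul_eq_zero_of_pow_four_eq_conj {r : ℝ} (hr : r ≠ 0) {A : AddCircle (1 : ℚ)}
    (h : ((r : ℂ) * eQZ A) ^ 4 = conj (((r : ℂ) * eQZ A) ^ 4)) : (8 : ℤ) • A = 0 := by
  have hr4 : (r : ℂ) ^ 4 ≠ 0 := pow_ne_zero 4 (Complex.ofReal_ne_zero.mpr hr)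
  rw [map_pow, map_mul, Complex.conj_ofReal, mul_pow, mul_pow, ← eQZ_neg] at h
  have h4 : eQZ A ^ 4 = eQZ (-A) ^ 4 := mul_left_cancel₀ hr4 h
  apply eq_zero_of_eQZ_eq_one
  calc eQZ ((8 : ℤ) • A) = eQZ A ^ 4 * eQZ (-A) ^ 4 := by
        rw [← h4, show (8 : ℤ) = ((8 : ℕ) : ℤ) from rfl, natCast_zsmul, eQZ_nsmul]; ring
    _ = eQZ (A + -A) ^ 4 := by rw [eQZ_add, mul_pow]
    _ = 1 := by rw [add_neg_cancel, eQZ_zero, one_pow]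

lemma exists_sum_four_sq_add_one_eq_sq (n : ℕ) (hn : 1 ≤ n) :
    ∃ a₁ a₂ a₃ a₄ : ℤ, a₁ ^ 2 + a₂ ^ 2 + a₃ ^ 2 + a₄ ^ 2 + 1 = (n : ℤ) ^ 2 := by
  obtain ⟨a₁, a₂, a₃, a₄, h⟩ := Nat.sum_four_squares (n ^ 2 - 1)
  refine ⟨a₁, a₂, a₃, a₄, ?_⟩
  have : 1 ≤ n ^ 2 := Nat.one_le_pow _ _ hn
  exact_mod_cast (by omega : a₁ ^ 2 + a₂ ^ 2 + a₃ ^ 2 + a₄ ^ 2 + 1 = n ^ 2)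

theorem stmt8_general {T : Type*} [AddCommGroup T] [Fintype T]
    (b : T → T → AddCircle (1 : ℚ))
    (hsymm : ∀ x y, b x y = b y x)
    (hadd : ∀ x y z, b (x + y) z = b x z + b y z)
    (q : T → AddCircle (1 : ℚ))
    (hq : ∀ x y, q (x + y) = q x + q y + b x y)
    (hhom : ∀ x, q x = q (-x))
    (Arf : AddCircle (1 : ℚ))
    (hArf : ∑ x : T, eQZ (q x) = Real.sqrt (Fintype.card T) * eQZ Arf) :
    (8 : ℤ) • Arf = 0 := by
  set N := Fintype.card T
  have hN : 1 ≤ N := Fintype.card_pos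
  let Q := QuadraticMap.ofRefinement (LinearMap.mk₂OfSymm b hsymm hadd) q hq hhom
  obtain ⟨a₁, a₂, a₃, a₄, ha⟩ := exists_sum_four_sq_add_one_eq_sq N hN
  have hT (x : T) : (a₁ ^ 2 + a₂ ^ 2 + a₃ ^ 2 + a₄ ^ 2) • x = -x := by
    refine eq_neg_of_add_eq_zero_left ?_
    rw [← add_one_zsmul, ha, sq, mul_smul, natCast_zsmul, card_nsmul_eq_zero]
  have hQ (x : T) : (a₁ ^ 2 + a₂ ^ 2 + a₃ ^ 2 + a₄ ^ 2) • Q x = -Q x := by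
    refine eq_neg_of_add_eq_zero_left ?_
    rw [← add_one_zsmul, ha, sq, ← Q.map_smul, natCast_zsmul, card_nsmul_eq_zero, Q.map_zero]
  have hQ4 (v : T × T × T × T) : Q.prodFour (quatMap a₁ a₂ a₃ a₄ v) = -Q.prodFour v := by
    rw [Q.prodFour_quatMap]
    simp only [QuadraticMap.prodFour_apply, smul_add, hQ, neg_add]
  have hreal := expSum_eq_conj_of_comp_eq_neg Q.prodFour (quatMap_bijective hT) hQ4
  rw [expSum_prodFour, show expSum Q = _ from hArf] at hreal
  exact eight_smul_eq_zero_of_pow_four_eq_conj (by positivity) hreal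

/-- the Arf invariant of a homogeneous quadratic refinement `q` of a
torsion form `b` on a finite abelian group satisfies `8·A(q) ∈ ℤ`, i.e. `8 A(q) = 0`
in `ℚ/ℤ`, where `A(q)` is defined by `Σ_{x∈T} e^{2πi q(x)} = √|T| e^{2πi A(q)}`. -/
theorem stmt8 {T : Type*} [AddCommGroup T] [Fintype T]
    (b : T → T → AddCircle (1 : ℚ))
    (hsymm : ∀ x y, b x y = b y x)
    (hadd : ∀ x y z, b (x + y) z = b x z + b y z)
    (hinj : ∀ x y : T, (∀ z, b z x = b z y) → x = y)
    (hsurj : ∀ φ : T →+ AddCircle (1 : ℚ), ∃ x : T, ∀ z, φ z = b z x)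
    (q : T → AddCircle (1 : ℚ))
    (hq : ∀ x y, q (x + y) = q x + q y + b x y)
    (hhom : ∀ x, q x = q (-x))
    (Arf : AddCircle (1 : ℚ))
    (hArf : ∑ x : T, eQZ (q x) = Real.sqrt (Fintype.card T) * eQZ Arf) :
    (8 : ℤ) • Arf = 0 :=
  stmt8_general b hsymm hadd q hq hhom Arf hArf
end

section
/- Let G be a finitely generated abelian group, p ∈ 2G a non-torsion element, and define d := max{s : s divides p in G}, d_π := divisibility of the image of p in G/T (T the torsion subgroup), and d_m := max{s : ∃ m ∈ ℤ, s·m² divides m·p in G}. Then d divides d_m, d_m divides d_π, and d = d_π if and only if d_m = d_π. -/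
/-!
Fix `m > 0` and `y` with `m·p = d_m·m²·y`. Then `m·(p - d_m·m·y) = 0`, so `d_m·m` divides `p`
modulo torsion; since the divisors of `p` modulo torsion are closed under `lcm`, `d_m·m ∣ d_π`.

For `d ∣ d_m`, let `ℓ^i ∣ p` with `ℓ` prime and write `m = ℓ^e·m'`, `d_m = ℓ^j·s'` with
`ℓ ∤ m'·s'`. Then `m'·p` is divisible by `ℓ^i·m'` and, cancelling the factor `ℓ^e`, which is prime
to `s'·m'²`, also by `s'·m'²`; hence by their lcm `ℓ^i·s'·m'²`. So `ℓ^i·s'` is a Wilkens divisor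
of `p`, and maximality of `d_m` gives `i ≤ j`.

Finally, if `d_m = d_π` then `d_m·m ∣ d_m` forces `m = 1`, so `d_m ∣ p` and `d = d_m`.
-/

namespace AddCommGroup

variable {A : Type*} [AddCommGroup A]

theorem exists_eq_zsmul_of_coprime {x : A} {n k l : ℕ} (hkl : k.Coprime l)
    (hk : ∃ y, (k : ℤ) • x = (n : ℤ) • y) (hl : ∃ y, (l : ℤ) • x = (n : ℤ) • y) :
    ∃ y, x = (n : ℤ) • y := by
  obtain ⟨u, v, huv⟩ := Nat.isCoprime_iff_coprime.2 hkl
  obtain ⟨y, hy⟩ := hk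
  obtain ⟨z, hz⟩ := hl
  refine ⟨u • y + v • z, ?_⟩
  calc x = (u * k + v * l) • x := by rw [huv, one_smul]
    _ = u • ((k : ℤ) • x) + v • ((l : ℤ) • x) := by rw [add_smul, mul_smul, mul_smul]
    _ = (n : ℤ) • (u • y + v • z) := by rw [hy, hz, smul_add, smul_comm u, smul_comm v]

theorem exists_eq_zsmul_of_coprime_smul {x : A} {n k : ℕ} (hkn : k.Coprime n)
    (hk : ∃ y, (k : ℤ) • x = (n : ℤ) • y) : ∃ y, x = (n : ℤ) • y :=
  exists_eq_zsmul_of_coprime hkn hk ⟨x, rfl⟩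

theorem exists_eq_lcm_zsmul {x : A} {a b : ℕ} (ha : ∃ y, x = (a : ℤ) • y)
    (hb : ∃ y, x = (b : ℤ) • y) : ∃ y, x = (a.lcm b : ℤ) • y := by
  rcases Nat.eq_zero_or_pos a with rfl | ha0
  · simpa using ha
  obtain ⟨y, rfl⟩ := ha
  obtain ⟨z, hz⟩ := hb
  have hg : 0 < a.gcd b := Nat.gcd_pos_of_pos_left b ha0
  refine exists_eq_zsmul_of_coprime (Nat.coprime_div_gcd_div_gcd hg) ⟨z, ?_⟩ ⟨y, ?_⟩
  · rw [hz, smul_smul, ← Nat.cast_mul, Nat.lcm, Nat.div_mul_right_comm (Nat.gcd_dvd_left a b)]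
  · rw [smul_smul, ← Nat.cast_mul, Nat.lcm, mul_comm a,
      Nat.div_mul_right_comm (Nat.gcd_dvd_right a b)]

theorem exists_isOfFinAddOrder_sub_zsmul_iff (x : A) (n : ℤ) :
    (∃ y, IsOfFinAddOrder (x - n • y)) ↔ ∃ y : A ⧸ torsion A, (x : A ⧸ torsion A) = n • y := by
  simp only [QuotientAddGroup.mk_surjective.exists, ← QuotientAddGroup.mk_zsmul,
    QuotientAddGroup.eq_iff_sub_mem, mem_torsion]

theorem exists_isOfFinAddOrder_sub_lcm_zsmul {x : A} {a b : ℕ}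
    (ha : ∃ y, IsOfFinAddOrder (x - (a : ℤ) • y))
    (hb : ∃ y, IsOfFinAddOrder (x - (b : ℤ) • y)) :
    ∃ y, IsOfFinAddOrder (x - (a.lcm b : ℤ) • y) := by
  rw [exists_isOfFinAddOrder_sub_zsmul_iff] at ha hb ⊢
  exact exists_eq_lcm_zsmul ha hb

end AddCommGroup

theorem Nat.dvd_of_isGreatest_of_lcm_mem {S : Set ℕ} (hS : ∀ a ∈ S, ∀ b ∈ S, a.lcm b ∈ S)
    {N s : ℕ} (hN : IsGreatest S N) (hs : s ∈ S) (hs0 : s ≠ 0) : s ∣ N := by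
  rcases eq_or_ne N 0 with rfl | hN0
  · exact dvd_zero s
  have hle : s.lcm N ≤ N := hN.2 (hS s hs N hN.1)
  have hge : N ≤ s.lcm N :=
    Nat.le_of_dvd (Nat.pos_of_ne_zero (Nat.lcm_ne_zero hs0 hN0)) (Nat.dvd_lcm_right s N)
  exact le_antisymm hle hge ▸ Nat.dvd_lcm_left s N

section Wilkens

variable {A : Type*} [AddCommGroup A]

def WilkensDvd (s : ℕ) (p : A) : Prop :=
  ∃ (m : ℕ) (y : A), 0 < m ∧ (m : ℤ) • p = ((s * m ^ 2 : ℕ) : ℤ) • y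

theorem isOfFinAddOrder_sub_zsmul_of_smul_eq {p y : A} {s m : ℕ} (hm : 0 < m)
    (h : (m : ℤ) • p = ((s * m ^ 2 : ℕ) : ℤ) • y) :
    IsOfFinAddOrder (p - ((s * m : ℕ) : ℤ) • y) := by
  refine isOfFinAddOrder_iff_nsmul_eq_zero.2 ⟨m, hm, ?_⟩
  rw [← natCast_zsmul, smul_sub, h, smul_smul, ← sub_smul]
  convert zero_smul ℤ y
  push_cast
  ring

theorem wilkensDvd_mul_of_coprime {p : A} {a t s e m : ℕ} (hm : 0 < m)
    (ha : ∃ y, p = (a : ℤ) • y)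
    (hp : ∃ y, ((e * m : ℕ) : ℤ) • p = ((t * s * (e * m) ^ 2 : ℕ) : ℤ) • y)
    (he : e.Coprime (s * m ^ 2)) (has : a.Coprime (s * m)) : WilkensDvd (a * s) p := by
  have hdvd_a : ∃ y, (m : ℤ) • p = ((m * a : ℕ) : ℤ) • y := by
    obtain ⟨y, rfl⟩ := ha
    exact ⟨y, by rw [smul_smul, Nat.cast_mul]⟩
  have hdvd_s : ∃ y, (m : ℤ) • p = ((m * (s * m) : ℕ) : ℤ) • y := by
    refine AddCommGroup.exists_eq_zsmul_of_coprime_smul (by convert he using 1; ring) ?_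
    obtain ⟨y, hy⟩ := hp
    refine ⟨((t * e ^ 2 : ℕ) : ℤ) • y, ?_⟩
    rw [smul_smul, smul_smul, ← Nat.cast_mul, ← Nat.cast_mul, hy]
    ring_nf
  obtain ⟨y, hy⟩ := AddCommGroup.exists_eq_lcm_zsmul hdvd_a hdvd_s
  rw [Nat.lcm_mul_left, has.lcm_eq_mul] at hy
  exact ⟨m, y, hm, by rw [hy]; ring_nf⟩

theorem pow_dvd_of_isGreatest_wilkensDvd {p : A} {ℓ i s : ℕ} (hℓ : ℓ.Prime)
    (hi : ∃ y, p = ((ℓ ^ i : ℕ) : ℤ) • y) (hs : IsGreatest {s | WilkensDvd s p} s)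
    (hs0 : s ≠ 0) : ℓ ^ i ∣ s := by
  obtain ⟨m, y, hm, hmy⟩ := hs.1
  have hcop {n : ℕ} (hn : n ≠ 0) (k : ℕ) : (ℓ ^ k).Coprime (ordCompl[ℓ] n) :=
    Nat.Coprime.pow_left k (hℓ.coprime_iff_not_dvd.2 (Nat.not_dvd_ordCompl hℓ hn))
  have hwil : WilkensDvd (ℓ ^ i * ordCompl[ℓ] s) p := by
    refine wilkensDvd_mul_of_coprime (t := ordProj[ℓ] s) (e := ordProj[ℓ] m)
      (Nat.ordCompl_pos ℓ hm.ne') hi ⟨y, ?_⟩ ?_ ?_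
    · rwa [Nat.ordProj_mul_ordCompl_eq_self, Nat.ordProj_mul_ordCompl_eq_self]
    · exact (hcop hs0 _).mul_right ((hcop hm.ne' _).pow_right 2)
    · exact (hcop hs0 _).mul_right (hcop hm.ne' _)
  have hle : ℓ ^ i * ordCompl[ℓ] s ≤ ordProj[ℓ] s * ordCompl[ℓ] s := by
    rw [Nat.ordProj_mul_ordCompl_eq_self]
    exact hs.2 hwil
  have hij : i ≤ s.factorization ℓ := (Nat.pow_le_pow_iff_right hℓ.one_lt).1
    (Nat.le_of_mul_le_mul_right hle (Nat.ordCompl_pos ℓ hs0))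
  exact ((Nat.pow_dvd_pow_iff_le_right hℓ.one_lt).2 hij).trans (Nat.ordProj_dvd s ℓ)

end Wilkens

theorem stmt15_general {G : Type*} [AddCommGroup G]
    (p : G) (hptor : ¬ IsOfFinAddOrder p)
    (d dπ dm : ℕ)
    (hd : (∃ y : G, p = (d : ℤ) • y) ∧
        ∀ s : ℕ, (∃ y : G, p = (s : ℤ) • y) → s ≤ d)
    (hdπ : (∃ y : G, IsOfFinAddOrder (p - (dπ : ℤ) • y)) ∧
        ∀ s : ℕ, (∃ y : G, IsOfFinAddOrder (p - (s : ℤ) • y)) → s ≤ dπ)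
    (hdm : (∃ (m : ℕ) (y : G), 0 < m ∧ (m : ℤ) • p = ((dm * m ^ 2 : ℕ) : ℤ) • y) ∧
        ∀ s : ℕ, (∃ (m : ℕ) (y : G), 0 < m ∧ (m : ℤ) • p = ((s * m ^ 2 : ℕ) : ℤ) • y) → s ≤ dm) :
    d ∣ dm ∧ dm ∣ dπ ∧ (d = dπ ↔ dm = dπ) := by
  have hdm_max : IsGreatest {s | WilkensDvd s p} dm := ⟨hdm.1, fun s hs => hdm.2 s hs⟩
  obtain ⟨m, y, hm, hmy⟩ := hdm.1
  have hdm0 : dm ≠ 0 := by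
    rintro rfl
    exact hptor (isOfFinAddOrder_iff_nsmul_eq_zero.2 ⟨m, hm, by simpa [← natCast_zsmul] using hmy⟩)
  have hdm_m : dm * m ∣ dπ :=
    Nat.dvd_of_isGreatest_of_lcm_mem (S := {s | ∃ y, IsOfFinAddOrder (p - (s : ℤ) • y)})
      (fun _ ha _ hb => AddCommGroup.exists_isOfFinAddOrder_sub_lcm_zsmul ha hb)
      ⟨hdπ.1, fun s hs => hdπ.2 s hs⟩ ⟨y, isOfFinAddOrder_sub_zsmul_of_smul_eq hm hmy⟩
      (Nat.mul_ne_zero hdm0 hm.ne')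
  have hd_dm : d ∣ dm := (Nat.dvd_iff_prime_pow_dvd_dvd dm d).2 fun ℓ i hℓ ⟨c, hc⟩ =>
    have ⟨y₀, hy₀⟩ := hd.1
    pow_dvd_of_isGreatest_wilkensDvd hℓ ⟨(c : ℤ) • y₀, by rw [hy₀, hc, smul_smul, Nat.cast_mul]⟩
      hdm_max hdm0
  have hdm_dπ : dm ∣ dπ := dvd_of_mul_right_dvd hdm_m
  refine ⟨hd_dm, hdm_dπ, fun h => Nat.dvd_antisymm hdm_dπ (h ▸ hd_dm), fun h => ?_⟩
  have hm1 : m = 1 := by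
    subst h
    exact Nat.dvd_one.1 ((Nat.mul_dvd_mul_iff_left (Nat.pos_of_ne_zero hdm0)).1 (by rwa [mul_one]))
  subst hm1
  have hdm_le : dm ≤ d := hd.2 dm ⟨y, by simpa using hmy⟩
  rw [← h, le_antisymm (Nat.le_of_dvd (Nat.pos_of_ne_zero hdm0) hd_dm) hdm_le]

/-- for a non-torsion element `p ∈ 2G` of a finitely generated abelian
group `G`, the three divisibilities
`d = max{s : s ∣ p in G}`, `d_π = max{s : s ∣ p mod torsion}` and
`d_m = max{s : ∃ m, s·m² ∣ m·p in G}` satisfy `d ∣ d_m`, `d_m ∣ d_π` and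
`d = d_π ↔ d_m = d_π`. -/
theorem stmt15 {G : Type*} [AddCommGroup G] [AddGroup.FG G]
    (p : G) (hp2 : ∃ g : G, p = 2 • g) (hptor : ¬ IsOfFinAddOrder p)
    (d dπ dm : ℕ)
    (hd : (∃ y : G, p = (d : ℤ) • y) ∧
        ∀ s : ℕ, (∃ y : G, p = (s : ℤ) • y) → s ≤ d)
    (hdπ : (∃ y : G, IsOfFinAddOrder (p - (dπ : ℤ) • y)) ∧
        ∀ s : ℕ, (∃ y : G, IsOfFinAddOrder (p - (s : ℤ) • y)) → s ≤ dπ)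
    (hdm : (∃ (m : ℕ) (y : G), 0 < m ∧ (m : ℤ) • p = ((dm * m ^ 2 : ℕ) : ℤ) • y) ∧
        ∀ s : ℕ, (∃ (m : ℕ) (y : G), 0 < m ∧ (m : ℤ) • p = ((s * m ^ 2 : ℕ) : ℤ) • y) → s ≤ dm) :
    d ∣ dm ∧ dm ∣ dπ ∧ (d = dπ ↔ dm = dπ) :=
  stmt15_general p hptor d dπ dm hd hdπ hdm
end

section
/- Let G be a finitely generated abelian group with torsion subgroup T, b a torsion form on T, p ∈ 2G with divisibilities d_π (mod torsion) and d_m (Wilkens divisibility). Let F : G → G be an automorphism with F(p) = p and F preserving b on T, and for k ∈ S_{d_π} = {k : p - d_π k ∈ T} set t := F(k) - k ∈ T and P(F) := d_π² b(t,t) - 2 d_π b(p - d_π k, t) ∈ ℚ/2d_πℤ. Then P(F) lies in the subgroup d_m ℤ/2d_π ℤ, i.e. P(F) is an integer multiple of d_m modulo 2d_π. -/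
/-!
Let `π : G → G ⧸ T` be the projection onto the torsion-free quotient. Then `π p = d_π π k`, and
`m p = d_m m² y` gives `π p = (d_m m) π y`. By Bezout `π p` is divisible by `lcm(d_π, d_m m)`, so
maximality of `d_π` forces `d_π = d_m m q`, and then `τ := y - q k` is torsion.

Put `N := d_m m²`, `s := F y - y` and `σ := F τ - τ`. As `N y = m p` is fixed by `F`, `N s = 0`;
moreover `q t = s - σ` and `m β = N τ`, so `m q (d_π b(t,t) - 2 b(β,t)) = N (b(qt,qt) - 2 b(τ,qt))`.
Completing the square and using `b(Fτ,Fτ) = b(τ,τ)`,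
`b(qt,qt) - 2 b(τ,qt) = b(s - Fτ, s - Fτ) - b(Fτ,Fτ) = b(s,s) - 2 b(Fτ,s)`, which `N` kills.
Thus `2 m q · P(F) = 0` in `ℚ/2d_πℤ`, i.e. `P(F) ∈ (2d_π / 2mq) ℤ = d_m ℤ`.
-/

/-- The "term of automorphy" `Δ(β_k, t) = d_π² b(t,t) - 2 d_π b(β_k, t) ∈ ℚ/2d_πℤ`. -/
noncomputable def Delta {G : Type*} [AddCommGroup G] (T : AddSubgroup G)
    (b : T → T → AddCircle (1 : ℚ)) (d : ℕ) (hd : (2 * (d : ℚ)) ≠ 0)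
    (β t : T) : AddCircle (2 * (d : ℚ)) :=
  (d / 2 : ℕ) • (AddCircle.equivAddCircle (1 : ℚ) (2 * (d : ℚ)) one_ne_zero hd (b t t)) -
    AddCircle.equivAddCircle (1 : ℚ) (2 * (d : ℚ)) one_ne_zero hd (b β t)

section TorsionFree

variable {Q : Type*} [AddCommGroup Q] [IsAddTorsionFree Q]

theorem exists_eq_lcm_zsmul_of_eq_zsmul {x u v : Q} {a b : ℕ} (hu : x = (a : ℤ) • u)
    (hv : x = (b : ℤ) • v) : ∃ w, x = (a.lcm b : ℤ) • w := by
  obtain ⟨a', b', hcop, ha, hb⟩ := Nat.exists_coprime a b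
  set g := a.gcd b
  rcases Nat.eq_zero_or_pos g with hg | hg
  · exact ⟨0, by rw [hu, ha, hg]; simp⟩
  have hab : (a' : ℤ) • u = (b' : ℤ) • v := by
    apply zsmul_right_injective (n := (g : ℤ)) (by positivity)
    simp only [smul_smul, ← Nat.cast_mul, mul_comm (g : ℤ), ← ha, ← hb, ← hu, ← hv]
  have hlcm : a.lcm b = a * b' :=
    Nat.eq_of_mul_eq_mul_left hg (by rw [Nat.gcd_mul_lcm, hb]; ring)
  obtain ⟨α, β, hαβ⟩ := Nat.isCoprime_iff_coprime.mpr hcop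
  have hu' : (b' : ℤ) • (α • v + β • u) = u := by
    rw [smul_add, smul_comm _ α, ← hab, smul_smul, smul_smul, ← add_smul, mul_comm _ β, hαβ,
      one_smul]
  exact ⟨α • v + β • u, by rw [hlcm, Nat.cast_mul, mul_smul, hu', hu]⟩

theorem dvd_of_eq_zsmul_of_forall_le {x u v : Q} {a b : ℕ} (hu : x = (a : ℤ) • u)
    (hv : x = (b : ℤ) • v) (hmax : ∀ s : ℕ, (∃ w, x = (s : ℤ) • w) → s ≤ a) : b ∣ a := by
  have hx : x ≠ 0 := fun hx => by simpa using hmax (a + 1) ⟨0, by simp [hx]⟩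
  have ha : a ≠ 0 := fun ha => hx (by simp [hu, ha])
  have hb : b ≠ 0 := fun hb => hx (by simp [hv, hb])
  obtain ⟨w, hw⟩ := exists_eq_lcm_zsmul_of_eq_zsmul hu hv
  rw [← Nat.lcm_eq_left_iff_dvd]
  exact le_antisymm (hmax _ ⟨w, hw⟩)
    (Nat.le_of_dvd (Nat.pos_of_ne_zero (Nat.lcm_ne_zero ha hb)) (Nat.dvd_lcm_left a b))

end TorsionFree

open AddCommGroup

theorem exists_sub_zsmul_mem_torsion_iff {G : Type*} [AddCommGroup G] (p : G) (n : ℤ) :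
    (∃ k, p - n • k ∈ torsion G) ↔ ∃ w : G ⧸ torsion G, (p : G ⧸ torsion G) = n • w := by
  simp only [← QuotientAddGroup.eq_iff_sub_mem, QuotientAddGroup.mk_zsmul]
  exact ⟨fun ⟨k, hk⟩ => ⟨k, hk⟩, fun ⟨w, hw⟩ => by
    obtain ⟨k, rfl⟩ := QuotientAddGroup.mk_surjective w; exact ⟨k, hw⟩⟩

theorem AddCircle.exists_eq_intCast_mul_of_nsmul_eq_zero {𝕜 : Type*} [Field 𝕜] [CharZero 𝕜]
    {p r : 𝕜} {n : ℕ} (hn : n ≠ 0) (hp : p = n * r) {x : AddCircle p} (h : n • x = 0) :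
    ∃ c : ℤ, x = ((c * r : 𝕜) : AddCircle p) := by
  obtain ⟨a, rfl⟩ := QuotientAddGroup.mk_surjective x
  rw [← AddCircle.coe_nsmul, AddCircle.coe_eq_zero_iff] at h
  obtain ⟨c, hc⟩ := h
  refine ⟨c, congrArg _ (mul_left_cancel₀ (Nat.cast_ne_zero.mpr hn : (n : 𝕜) ≠ 0) ?_)⟩
  rw [zsmul_eq_mul, nsmul_eq_mul, hp] at hc
  linear_combination -hc

namespace AddMonoidHom

variable {M A : Type*} [AddCommGroup M] [AddCommGroup A]

def mk₂OfSymm (b : M → M → A) (hsymm : ∀ s t, b s t = b t s)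
    (hadd : ∀ s t u, b (s + t) u = b s u + b t u) : M →+ M →+ A :=
  mk' (fun s => mk' (b s) fun t u => by rw [hsymm, hadd, hsymm t, hsymm u]) fun s t => by
    ext u; exact hadd s t u

variable (B : M →+ M →+ A)

theorem apply_sub_apply_sub (hB : ∀ x y, B x y = B y x) (u v : M) :
    B (u - v) (u - v) = B u u - 2 • B v u + B v v := by
  simp only [map_sub, sub_apply, hB u v]
  abel

theorem nsmul_apply_sub_eq_zero (hB : ∀ x y, B x y = B y x) {N : ℕ} {τ τ' s u : M}
    (hτ' : B τ' τ' = B τ τ) (hu : u = s - (τ' - τ)) (hs : N • s = 0) :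
    N • (B u u - 2 • B τ u) = 0 := by
  have hsq : B u u - 2 • B τ u = B s s - 2 • B τ' s := by
    have h1 := apply_sub_apply_sub B hB u τ
    have h2 := apply_sub_apply_sub B hB s τ'
    rw [show u - τ = s - τ' by rw [hu]; abel] at h1
    rw [h1, hτ'] at h2
    exact add_right_cancel h2
  rw [hsq, smul_sub, ← nsmul_apply, ← map_nsmul, hs, smul_comm, ← map_nsmul, hs]
  simp

theorem nsmul_mul_apply_sub_eq_zero (hB : ∀ x y, B x y = B y x) {dm m q : ℕ} {β t τ τ' s : M}
    (hβ : m • β = (dm * m ^ 2) • τ) (ht : q • t = s - (τ' - τ)) (hτ' : B τ' τ' = B τ τ)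
    (hs : (dm * m ^ 2) • s = 0) :
    (m * q) • ((dm * m * q) • B t t - 2 • B β t) = 0 := by
  have hβt : m • B β t = (dm * m ^ 2) • B τ t := by
    rw [← nsmul_apply, ← map_nsmul, hβ, map_nsmul, nsmul_apply]
  have : (m * q) • ((dm * m * q) • B t t - 2 • B β t) =
      (dm * m ^ 2) • (B (q • t) (q • t) - 2 • B τ (q • t)) := by
    simp only [map_nsmul, nsmul_apply, smul_sub, smul_smul]
    rw [show m * q * 2 = q * 2 * m by ring, mul_smul (q * 2) m, hβt, smul_smul]
    congr 2 <;> ring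
  rw [this]
  exact nsmul_apply_sub_eq_zero B hB hτ' ht hs

end AddMonoidHom

theorem two_nsmul_Delta {G : Type*} [AddCommGroup G] (T : AddSubgroup G)
    (b : T → T → AddCircle (1 : ℚ)) {d : ℕ} (hd : (2 * (d : ℚ)) ≠ 0) (hev : Even d) (β t : T) :
    2 • Delta T b d hd β t =
      AddCircle.equivAddCircle (1 : ℚ) (2 * (d : ℚ)) one_ne_zero hd (d • b t t - 2 • b β t) := by
  rw [Delta, map_sub, map_nsmul, map_nsmul, smul_sub, smul_smul,
    Nat.mul_div_cancel' (even_iff_two_dvd.mp hev)]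

theorem exists_eq_mul_and_sub_nsmul_mem_torsion {G : Type*} [AddCommGroup G] {p k y : G}
    {d e m : ℕ} (hm : 0 < m) (hk : p - (d : ℤ) • k ∈ torsion G)
    (hmax : ∀ s : ℕ, (∃ k : G, p - (s : ℤ) • k ∈ torsion G) → s ≤ d)
    (hy : (m : ℤ) • p = ((e * m ^ 2 : ℕ) : ℤ) • y) :
    ∃ q, d = e * m * q ∧ y - q • k ∈ torsion G := by
  have hpk : (p : G ⧸ torsion G) = (d : ℤ) • (k : G ⧸ torsion G) := by
    rw [← QuotientAddGroup.mk_zsmul]; exact QuotientAddGroup.eq_iff_sub_mem.mpr hk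
  have hpy : (p : G ⧸ torsion G) = ((e * m : ℕ) : ℤ) • (y : G ⧸ torsion G) := by
    apply zsmul_right_injective (n := (m : ℤ)) (by positivity)
    simp only [← QuotientAddGroup.mk_zsmul, smul_smul, hy]
    push_cast; ring_nf
  obtain ⟨q, rfl⟩ := dvd_of_eq_zsmul_of_forall_le hpk hpy fun s ⟨w, hw⟩ =>
    hmax s ((exists_sub_zsmul_mem_torsion_iff p s).mpr ⟨w, hw⟩)
  have hem : e * m ≠ 0 := by
    rintro h
    simpa [h] using hmax 1 ⟨p, by simp⟩
  refine ⟨q, rfl, ?_⟩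
  rw [← QuotientAddGroup.eq_zero_iff]
  apply zsmul_right_injective (n := ((e * m : ℕ) : ℤ)) (by exact_mod_cast hem)
  simp only [QuotientAddGroup.mk_sub, QuotientAddGroup.mk_nsmul, smul_sub, smul_zero, ← hpy]
  rw [hpk, ← natCast_zsmul, smul_smul, ← Nat.cast_mul, sub_self]

theorem nsmul_termOfAutomorphy_eq_zero {G A : Type*} [AddCommGroup G] [AddCommGroup A]
    (B : torsion G →+ torsion G →+ A) (hB : ∀ x y, B x y = B y x) (F : G →+ G)
    (hF : ∀ (s : torsion G) (hs : F s ∈ torsion G), B ⟨F s, hs⟩ ⟨F s, hs⟩ = B s s)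
    {p k y : G} {dm m q : ℕ} (hFp : F p = p) (hy : (m : ℤ) • p = ((dm * m ^ 2 : ℕ) : ℤ) • y)
    (hτ : y - q • k ∈ torsion G) (hk : p - ((dm * m * q : ℕ) : ℤ) • k ∈ torsion G)
    (ht : F k - k ∈ torsion G) :
    (m * q) • ((dm * m * q) • B ⟨_, ht⟩ ⟨_, ht⟩ - 2 • B ⟨_, hk⟩ ⟨_, ht⟩) = 0 := by
  have hFτ : F (y - q • k) ∈ torsion G := F.isOfFinAddOrder hτ
  have hs : F y - y ∈ torsion G := by
    convert (torsion G).add_mem ((torsion G).nsmul_mem ht q) ((torsion G).sub_mem hFτ hτ) using 1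
    simp only [map_sub, map_nsmul, smul_sub]
    abel
  have hy' : (dm * m ^ 2) • y = m • p := by simpa only [natCast_zsmul] using hy.symm
  have hNs : (dm * m ^ 2) • (F y - y) = 0 := by
    rw [smul_sub, ← map_nsmul, hy', map_nsmul, hFp, sub_self]
  have hβ : m • (⟨_, hk⟩ : torsion G) = (dm * m ^ 2) • (⟨_, hτ⟩ : torsion G) := by
    apply Subtype.ext
    simp only [AddSubgroup.coe_nsmul, smul_sub, hy', natCast_zsmul, smul_smul]
    ring_nf
  have hqt : q • (⟨_, ht⟩ : torsion G) = ⟨_, hs⟩ - (⟨_, hFτ⟩ - ⟨_, hτ⟩) := by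
    apply Subtype.ext
    simp only [AddSubgroup.coe_nsmul, AddSubgroup.coe_sub, map_sub, map_nsmul, smul_sub]
    abel
  exact B.nsmul_mul_apply_sub_eq_zero hB hβ hqt (hF ⟨_, hτ⟩ hFτ) (Subtype.ext hNs)

theorem stmt17_general {G : Type*} [AddCommGroup G]
    (T : AddSubgroup G) (hT : ∀ x : G, x ∈ T ↔ IsOfFinAddOrder x)
    (b : T → T → AddCircle (1 : ℚ))
    (hsymm : ∀ s t, b s t = b t s)
    (hadd : ∀ s t u, b (s + t) u = b s u + b t u)
    (p : G)
    (dπ dm : ℕ) (hdπ0 : 0 < dπ) (heven : Even dπ) (hd2 : (2 * (dπ : ℚ)) ≠ 0)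
    (hdπ : (∃ k : G, p - (dπ : ℤ) • k ∈ T) ∧
        ∀ s : ℕ, (∃ k : G, p - (s : ℤ) • k ∈ T) → s ≤ dπ)
    (hdm : (∃ (m : ℕ) (y : G), 0 < m ∧ (m : ℤ) • p = ((dm * m ^ 2 : ℕ) : ℤ) • y) ∧
        ∀ s : ℕ, (∃ (m : ℕ) (y : G), 0 < m ∧ (m : ℤ) • p = ((s * m ^ 2 : ℕ) : ℤ) • y) → s ≤ dm)
    (F : G ≃+ G) (hFp : F p = p)
    (hFb : ∀ (s t : T) (hs : F (s : G) ∈ T) (ht : F (t : G) ∈ T),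
        b ⟨F (s : G), hs⟩ ⟨F (t : G), ht⟩ = b s t) :
    ∀ (k : G) (hk : p - (dπ : ℤ) • k ∈ T) (ht : F k - k ∈ T),
      ∃ c : ℤ, Delta T b dπ hd2 ⟨p - (dπ : ℤ) • k, hk⟩ ⟨F k - k, ht⟩ =
        (((c * dm : ℤ) : ℚ) : AddCircle (2 * (dπ : ℚ))) := by
  intro k hk ht
  obtain rfl : T = torsion G := AddSubgroup.ext hT
  obtain ⟨m, y, hm, hmy⟩ := hdm.1
  obtain ⟨q, rfl, hτ⟩ := exists_eq_mul_and_sub_nsmul_mem_torsion hm hk hdπ.2 hmy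
  have hmq : 0 < m * q := Nat.pos_of_mul_pos_left (by rwa [mul_assoc] at hdπ0)
  have key := nsmul_termOfAutomorphy_eq_zero (AddMonoidHom.mk₂OfSymm b hsymm hadd)
    (fun x y => hsymm x y) F.toAddMonoidHom (fun s hs => hFb s s hs hs) hFp hmy hτ hk ht
  have hzero : (2 * (m * q)) • Delta (torsion G) b (dm * m * q) hd2 ⟨_, hk⟩ ⟨_, ht⟩ = 0 := by
    rw [mul_comm 2 (m * q), mul_smul, two_nsmul_Delta _ _ _ heven, ← map_nsmul]
    exact (congrArg _ key).trans (map_zero _)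
  obtain ⟨c, hc⟩ := AddCircle.exists_eq_intCast_mul_of_nsmul_eq_zero (r := (dm : ℚ))
    (Nat.mul_ne_zero two_ne_zero hmq.ne') (by push_cast; ring) hzero
  exact ⟨c, by rw [hc, Int.cast_mul, Int.cast_natCast]⟩

/-- for an automorphism `F` of `G` fixing `p` and preserving the torsion
linking form `b`, the value `P(F) = Δ(k, F(k)-k) = d_π² b(t,t) - 2d_π b(β_k,t)`
(for any `k ∈ S_{d_π}`, `t = F(k)-k`) lies in the subgroup `d_m ℤ/2d_π ℤ`,
i.e. it is an integer multiple of the Wilkens divisibility `d_m` modulo `2d_π`. -/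
theorem stmt17 {G : Type*} [AddCommGroup G] [AddGroup.FG G]
    (T : AddSubgroup G) (hT : ∀ x : G, x ∈ T ↔ IsOfFinAddOrder x)
    (b : T → T → AddCircle (1 : ℚ))
    (hsymm : ∀ s t, b s t = b t s)
    (hadd : ∀ s t u, b (s + t) u = b s u + b t u)
    (hbinj : ∀ s t : T, (∀ u, b u s = b u t) → s = t)
    (hbsurj : ∀ φ : T →+ AddCircle (1 : ℚ), ∃ s, ∀ u, φ u = b u s)
    (p : G) (hp2 : ∃ g : G, p = 2 • g)
    (dπ dm : ℕ) (hdπ0 : 0 < dπ) (heven : Even dπ) (hd2 : (2 * (dπ : ℚ)) ≠ 0)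
    (hdπ : (∃ k : G, p - (dπ : ℤ) • k ∈ T) ∧
        ∀ s : ℕ, (∃ k : G, p - (s : ℤ) • k ∈ T) → s ≤ dπ)
    (hdm : (∃ (m : ℕ) (y : G), 0 < m ∧ (m : ℤ) • p = ((dm * m ^ 2 : ℕ) : ℤ) • y) ∧
        ∀ s : ℕ, (∃ (m : ℕ) (y : G), 0 < m ∧ (m : ℤ) • p = ((s * m ^ 2 : ℕ) : ℤ) • y) → s ≤ dm)
    (F : G ≃+ G) (hFp : F p = p)
    (hFb : ∀ (s t : T) (hs : F (s : G) ∈ T) (ht : F (t : G) ∈ T),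
        b ⟨F (s : G), hs⟩ ⟨F (t : G), ht⟩ = b s t) :
    ∀ (k : G) (hk : p - (dπ : ℤ) • k ∈ T) (ht : F k - k ∈ T),
      ∃ c : ℤ, Delta T b dπ hd2 ⟨p - (dπ : ℤ) • k, hk⟩ ⟨F k - k, ht⟩ =
        (((c * dm : ℤ) : ℚ) : AddCircle (2 * (dπ : ℚ))) :=
  stmt17_general T hT b hsymm hadd p dπ dm hdπ0 heven hd2 hdπ hdm F hFp hFb
end

section
/- Let G = ℤ ⊕ ℤ/2^j with torsion form b = ⟨1/2^j⟩ on T = ℤ/2^j (b(x,y) = xy/2^j) and p = (2^j, 2^{j-1}) with j ≥ 2. Then for every t ∈ T and every k ∈ S_{d_π} (where d_π = 2^j), Δ(k,t) = d_π² b(t,t) - 2 d_π b(p - d_π k, t) ≡ 0 mod 2^{j+1}, i.e. the homomorphism P : Aut_b(G) → ℚ/2^{j+1}ℤ is identically zero. -/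
/-!
Since `2^j` kills `ℤ/2^j`, the torsion part of `β_k = p - 2^j k` is `2^{j-1}` whatever `k` is, and
`Δ(k,t) = 2^j t² - 2^j t = 2^j · t(t - 1)`, which lies in `2^{j+1}ℤ` because `t(t - 1)` is even.
-/

theorem ZMod.natCast_self_zsmul (n : ℕ) (x : ZMod n) : (n : ℤ) • x = 0 := by
  rw [natCast_zsmul, nsmul_eq_mul, ZMod.natCast_self, zero_mul]

theorem two_pow_sq_mul_div_sub (j : ℕ) (hj : 1 ≤ j) (x : ℚ) :
    (2 ^ j : ℚ) ^ 2 * (x * x / 2 ^ j) - 2 * 2 ^ j * (2 ^ (j - 1) * x / 2 ^ j) =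
      2 ^ j * (x * (x - 1)) := by
  have h2j : (2 : ℚ) ^ j = 2 * 2 ^ (j - 1) := by
    rw [← pow_succ', Nat.sub_add_cancel hj]
  rw [h2j]
  field_simp

theorem Int.exists_two_pow_mul_mul_pred_eq (j : ℕ) (t : ℤ) :
    ∃ c : ℤ, (2 ^ j : ℚ) * (t * (t - 1)) = c * 2 ^ (j + 1) := by
  obtain ⟨m, hm⟩ := t.even_mul_pred_self
  refine ⟨m, ?_⟩
  have hq : (t : ℚ) * (t - 1) = m + m := by exact_mod_cast hm
  rw [hq, pow_succ]
  ring

/-- for `G = ℤ ⊕ ℤ/2^j` with torsion form `b(x,y) = xy/2^j` on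
`T = ℤ/2^j` and `p = (2^j, 2^{j-1})`, `j ≥ 2` (so `d_π = 2^j`): for every
`k ∈ S_{d_π}` and every `t ∈ T`,
`Δ(k,t) = d_π² b(t,t) - 2 d_π b(β_k, t) ≡ 0 mod 2^{j+1}`,
i.e. the homomorphism `P : Aut_b(G) → ℚ/2^{j+1}ℤ` is identically zero. -/
theorem stmt19 (j : ℕ) (hj : 2 ≤ j) :
    ∀ (k : ℤ × ZMod (2 ^ j)) (t : ZMod (2 ^ j)),
      IsOfFinAddOrder
          ((((2 : ℤ) ^ j, ((2 ^ (j - 1) : ℕ) : ZMod (2 ^ j))) : ℤ × ZMod (2 ^ j)) -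
            ((2 ^ j : ℕ) : ℤ) • k) →
      ∃ c : ℤ,
        ((2 ^ j : ℚ)) ^ 2 * (((t.val : ℚ) * (t.val : ℚ)) / (2 ^ j : ℚ)) -
            2 * (2 ^ j : ℚ) *
              (((((( 2 ^ (j - 1) : ℕ) : ZMod (2 ^ j)) - ((2 ^ j : ℕ) : ℤ) • k.2).val : ℚ) *
                  (t.val : ℚ)) / (2 ^ j : ℚ)) =
          (c : ℚ) * 2 ^ (j + 1) := by
  intro k t _
  have hlt : 2 ^ (j - 1) < 2 ^ j := Nat.pow_lt_pow_right (by norm_num) (by omega)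
  rw [ZMod.natCast_self_zsmul, sub_zero, ZMod.val_cast_of_lt hlt, Nat.cast_pow, Nat.cast_ofNat,
    two_pow_sq_mul_div_sub j (by omega)]
  exact_mod_cast Int.exists_two_pow_mul_mul_pred_eq j t.val
end
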